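/- For every integer n ≥ 2, the function F_n(x) = (x²/(e^{2x}−1)) · ( n(n+1)(e^{x}−1)²/12 + (n+1)(e^{x}−1)/2 + 1 ) is strictly monotone increasing on (0,∞). -/
import Mathlib


open Real Filter

/-- `F_n(x) = (x²/(e^{2x}−1))·(n(n+1)(e^x−1)²/12 + (n+1)(e^x−1)/2 + 1)`. -/
noncomputable def Ffun (n : ℕ) (x : ℝ) : ℝ :=
  x ^ 2 / (exp (2 * x) - 1) *
    ((n : ℝ) * (n + 1) * (exp x - 1) ^ 2 / 12 + (n + 1) * (exp x - 1) / 2 + 1)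

lemma Ffun_decomp (n : ℕ) {x : ℝ} (hx : 0 < x) :
    Ffun n x = (n : ℝ) * ((n : ℝ) - 2) / 12 * (x ^ 2 * (exp x - 1) / (exp x + 1))
      + ((n : ℝ) - 2) / 4 * x ^ 2 + (1 / 2) * (x ^ 2 * exp x / (exp x - 1)) := by
  have hA : 1 < exp x := by simpa using Real.exp_lt_exp.2 hx
  have h2x : exp (2 * x) = exp x ^ 2 := by rw [two_mul, exp_add, sq]
  have h1 : exp x - 1 ≠ 0 := by linarith
  have h2 : exp x + 1 ≠ 0 := by linarith
  have h3 : exp (2 * x) - 1 ≠ 0 := by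
    rw [h2x]; nlinarith
  unfold Ffun
  rw [h2x] at *
  field_simp
  ring

lemma aux1 {a b : ℝ} (ha : 0 < a) (hab : a < b) :
    a ^ 2 * (exp a - 1) / (exp a + 1) ≤ b ^ 2 * (exp b - 1) / (exp b + 1) := by
  have hA : 1 < exp a := by simpa using Real.exp_lt_exp.2 ha
  have hAB : exp a < exp b := Real.exp_lt_exp.2 hab
  rw [div_le_div_iff₀ (by linarith) (by linarith)]
  have hsq : a ^ 2 ≤ b ^ 2 := pow_le_pow_left₀ ha.le hab.le 2
  have hX : (exp a - 1) * (exp b + 1) ≤ (exp b - 1) * (exp a + 1) := by nlinarith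
  have hY := mul_le_mul hsq hX (by nlinarith) (sq_nonneg b)
  nlinarith [hY]

lemma key_ineq {a b : ℝ} (ha : 0 < a) (hab : a < b) :
    b * exp b < (b - a) * exp a * exp b + a * exp a := by
  set A := exp a with hAdef
  set C := exp (b - a) with hCdef
  have hBC : exp b = A * C := by rw [hAdef, hCdef, ← exp_add]; ring_nf
  have hA0 : (0 : ℝ) < A := exp_pos a
  have hC0 : (0 : ℝ) < C := exp_pos _
  have h1 : 1 + a < A := by
    have := Real.add_one_lt_exp (ne_of_gt ha)
    linarith
  have h2 : (1 + a - b) * C ≤ 1 := by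
    have h := Real.add_one_le_exp (a - b)
    have : (a - b + 1) ≤ 1 / C := by
      rw [hCdef, one_div, ← Real.exp_neg, neg_sub]
      exact h
    calc (1 + a - b) * C = (a - b + 1) * C := by ring
      _ ≤ (1 / C) * C := by
          exact mul_le_mul_of_nonneg_right this hC0.le
      _ = 1 := by field_simp
  have key2 : b * C < (b - a) * A * C + a := by
    have hmul : 0 < (b - a) * C := mul_pos (by linarith) hC0
    have hp1 : (b - a) * C * (1 + a) < (b - a) * C * A :=
      mul_lt_mul_of_pos_left h1 hmul
    have hp2 : a * ((1 + a - b) * C) ≤ a * 1 := mul_le_mul_of_nonneg_left h2 ha.le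
    nlinarith [hp1, hp2]
  rw [hBC]
  nlinarith [mul_lt_mul_of_pos_left key2 hA0]

lemma aux3 {a b : ℝ} (ha : 0 < a) (hab : a < b) :
    a ^ 2 * exp a / (exp a - 1) < b ^ 2 * exp b / (exp b - 1) := by
  have hA : 1 < exp a := by simpa using Real.exp_lt_exp.2 ha
  have hB : 1 < exp b := by simpa using Real.exp_lt_exp.2 (ha.trans hab)
  have hAB : exp a < exp b := Real.exp_lt_exp.2 hab
  rw [div_lt_div_iff₀ (by linarith) (by linarith)]
  have key := key_ineq ha hab
  have h5 : a * (exp a * (exp b - 1)) < b * (exp b * (exp a - 1)) := by nlinarith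
  have h6 : a * (a * (exp a * (exp b - 1))) < a * (b * (exp b * (exp a - 1))) :=
    mul_lt_mul_of_pos_left h5 ha
  have h7 : a * (b * (exp b * (exp a - 1))) ≤ b * (b * (exp b * (exp a - 1))) := by
    have hb0 : (0:ℝ) < b := ha.trans hab
    have hpos : 0 ≤ b * (exp b * (exp a - 1)) :=
      mul_nonneg hb0.le (mul_nonneg (exp_pos b).le (by linarith))
    exact mul_le_mul_of_nonneg_right hab.le hpos
  nlinarith [h6, h7]

/-- `F_n` is strictly monotone increasing on `(0,∞)` for every `n ≥ 2`. -/
theorem Ffun_strictMonoOn (n : ℕ) (hn : 2 ≤ n) :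
    StrictMonoOn (Ffun n) (Set.Ioi (0 : ℝ)) := by
  intro a ha b hb hab
  simp only [Set.mem_Ioi] at ha hb
  rw [Ffun_decomp n ha, Ffun_decomp n hb]
  have hn2 : (2 : ℝ) ≤ (n : ℝ) := by exact_mod_cast hn
  have hc1 : (0 : ℝ) ≤ (n : ℝ) * ((n : ℝ) - 2) / 12 := by
    apply div_nonneg _ (by norm_num)
    apply mul_nonneg (by positivity) (by linarith)
  have hc2 : (0 : ℝ) ≤ ((n : ℝ) - 2) / 4 := by
    apply div_nonneg (by linarith) (by norm_num)
  have h1 := aux1 ha hab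
  have h2 : a ^ 2 ≤ b ^ 2 := pow_le_pow_left₀ ha.le hab.le 2
  have h3 := aux3 ha hab
  have t1 := mul_le_mul_of_nonneg_left h1 hc1
  have t2 := mul_le_mul_of_nonneg_left h2 hc2
  have t3 : (1 / 2 : ℝ) * (a ^ 2 * exp a / (exp a - 1))
      < (1 / 2) * (b ^ 2 * exp b / (exp b - 1)) := by linarith
  exact add_lt_add_of_le_of_lt (add_le_add t1 t2) t3
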